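/- (Doubly robust / augmented identification.) Under the same setup and assumptions (i)–(iii) as the IPW identification result, let g_0, g_1 be arbitrary bounded functions of X, g(X,A) = A·g_1(X) + (1−A)·g_0(X), and define φ = S·(A − e_1(X))/(p(X)·e_1(X)·(1−e_1(X))) · (Y − g(X,A)) + g_1(X) − g_0(X). Then for every w in the support of W = f(X): E[φ | W=w] = E[Y^1 − Y^0 | W=w]. -/
import Mathlib


open scoped Classical
open Finset

/-- Probability of an event on a finite probability space with weights `P`. -/
noncomputable def prW {Ω : Type*} [Fintype Ω] (P : Ω → ℝ) (E : Ω → Prop) : ℝ :=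
  ∑ ω, if E ω then P ω else 0

/-- Conditional expectation of `f` given the event `E`: `E[f · 1_E] / P(E)`. -/
noncomputable def cexp {Ω : Type*} [Fintype Ω] (P : Ω → ℝ) (f : Ω → ℝ) (E : Ω → Prop) : ℝ :=
  (∑ ω, if E ω then P ω * f ω else 0) / prW P E

lemma prW_nonneg {Ω : Type*} [Fintype Ω] (P : Ω → ℝ) (hP0 : ∀ ω, 0 ≤ P ω) (E : Ω → Prop) :
    0 ≤ prW P E :=
  Finset.sum_nonneg fun ω _ => by split <;> simp [hP0 ω]

lemma prW_zero {Ω : Type*} [Fintype Ω] (P : Ω → ℝ) (hP0 : ∀ ω, 0 ≤ P ω) {E : Ω → Prop}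
    (hE : prW P E = 0) {ω : Ω} (hω : E ω) : P ω = 0 := by
  have h := (Finset.sum_eq_zero_iff_of_nonneg
    (fun ω _ => by split <;> simp [hP0 ω])).mp hE ω (Finset.mem_univ ω)
  simpa [hω] using h

/-- Doubly robust / augmented identification of the CATE: under the same assumptions as
    the IPW identification result, for arbitrary functions `g₀, g₁` of `X`, the augmented
    pseudo-outcome `φ` identifies `E[Y¹ − Y⁰ | W=w]`. -/
theorem doubly_robust_identification_of_cate
    {Ω 𝒳 𝒲 : Type*} [Fintype Ω]
    (P : Ω → ℝ) (hP0 : ∀ ω, 0 ≤ P ω) (hP1 : ∑ ω, P ω = 1)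
    (S A Y Y0 Y1 : Ω → ℝ) (X : Ω → 𝒳) (f : 𝒳 → 𝒲)
    (hS : ∀ ω, S ω = 0 ∨ S ω = 1) (hA : ∀ ω, A ω = 0 ∨ A ω = 1)
    (hcons : ∀ ω, S ω = 1 → Y ω = A ω * Y1 ω + (1 - A ω) * Y0 ω)
    (e1 p : 𝒳 → ℝ)
    (hp : ∀ x, p x = cexp P (fun ω => if S ω = 1 then 1 else 0) (fun ω => X ω = x))
    (he1 : ∀ x, e1 x = cexp P (fun ω => if A ω = 1 then 1 else 0)
      (fun ω => X ω = x ∧ S ω = 1))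
    (hexchA1 : ∀ x, 0 < prW P (fun ω => X ω = x ∧ S ω = 1 ∧ A ω = 1) →
      cexp P Y1 (fun ω => X ω = x ∧ S ω = 1 ∧ A ω = 1)
        = cexp P Y1 (fun ω => X ω = x ∧ S ω = 1))
    (hexchA0 : ∀ x, 0 < prW P (fun ω => X ω = x ∧ S ω = 1 ∧ A ω = 0) →
      cexp P Y0 (fun ω => X ω = x ∧ S ω = 1 ∧ A ω = 0)
        = cexp P Y0 (fun ω => X ω = x ∧ S ω = 1))
    (hexchS : ∀ x, 0 < prW P (fun ω => X ω = x ∧ S ω = 1) →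
      cexp P (fun ω => Y1 ω - Y0 ω) (fun ω => X ω = x ∧ S ω = 1)
        = cexp P (fun ω => Y1 ω - Y0 ω) (fun ω => X ω = x))
    (hpos : ∀ x, 0 < prW P (fun ω => X ω = x) → 0 < p x ∧ 0 < e1 x ∧ e1 x < 1)
    -- arbitrary (bounded, automatic on a finite space) outcome-model functions
    (g0 g1 : 𝒳 → ℝ)
    (φ : Ω → ℝ)
    (hφ : ∀ ω, φ ω =
      S ω * (A ω - e1 (X ω)) / (p (X ω) * e1 (X ω) * (1 - e1 (X ω))) *
        (Y ω - (A ω * g1 (X ω) + (1 - A ω) * g0 (X ω)))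
      + g1 (X ω) - g0 (X ω)) :
    ∀ w, 0 < prW P (fun ω => f (X ω) = w) →
      cexp P φ (fun ω => f (X ω) = w)
        = cexp P (fun ω => Y1 ω - Y0 ω) (fun ω => f (X ω) = w) := by
  have key : ∀ x : 𝒳, (∑ ω, if X ω = x then P ω * φ ω else 0)
      = ∑ ω, if X ω = x then P ω * (Y1 ω - Y0 ω) else 0 := by
    intro x
    by_cases hq : 0 < prW P (fun ω => X ω = x)
    · obtain ⟨hppos, hepos, helt⟩ := hpos x hq
      have hqne : prW P (fun ω => X ω = x) ≠ 0 := ne_of_gt hq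
      have hpne : p x ≠ 0 := ne_of_gt hppos
      have hene : e1 x ≠ 0 := ne_of_gt hepos
      have he1ne : (1:ℝ) - e1 x ≠ 0 := by linarith
      -- q1 = p x * q
      have hq1 : prW P (fun ω => X ω = x ∧ S ω = 1)
          = p x * prW P (fun ω => X ω = x) := by
        have h := hp x
        simp only [cexp] at h
        rw [eq_div_iff hqne] at h
        rw [h]
        simp only [prW]
        refine Finset.sum_congr rfl fun ω _ => ?_
        by_cases h1 : X ω = x <;> by_cases h2 : S ω = 1 <;> simp [h1, h2]
      have hq1pos : 0 < prW P (fun ω => X ω = x ∧ S ω = 1) := by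
        rw [hq1]; exact mul_pos hppos hq
      have hq1ne := ne_of_gt hq1pos
      -- q11 = e1 x * q1
      have hq11 : prW P (fun ω => X ω = x ∧ S ω = 1 ∧ A ω = 1)
          = e1 x * prW P (fun ω => X ω = x ∧ S ω = 1) := by
        have h := he1 x
        simp only [cexp] at h
        rw [eq_div_iff hq1ne] at h
        rw [h]
        simp only [prW]
        refine Finset.sum_congr rfl fun ω _ => ?_
        by_cases h1 : X ω = x <;> by_cases h2 : S ω = 1 <;> by_cases h3 : A ω = 1 <;>
          simp [h1, h2, h3]
      have hq11pos : 0 < prW P (fun ω => X ω = x ∧ S ω = 1 ∧ A ω = 1) := by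
        rw [hq11]; exact mul_pos hepos hq1pos
      -- q1 = q11 + q10
      have hsplit : prW P (fun ω => X ω = x ∧ S ω = 1)
          = prW P (fun ω => X ω = x ∧ S ω = 1 ∧ A ω = 1)
            + prW P (fun ω => X ω = x ∧ S ω = 1 ∧ A ω = 0) := by
        simp only [prW]
        rw [← Finset.sum_add_distrib]
        refine Finset.sum_congr rfl fun ω _ => ?_
        rcases hA ω with h | h <;> by_cases h1 : X ω = x <;> by_cases h2 : S ω = 1 <;>
          simp [h, h1, h2]
      have hq10 : prW P (fun ω => X ω = x ∧ S ω = 1 ∧ A ω = 0)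
          = (1 - e1 x) * prW P (fun ω => X ω = x ∧ S ω = 1) := by
        rw [hq11] at hsplit; linarith
      have hq10pos : 0 < prW P (fun ω => X ω = x ∧ S ω = 1 ∧ A ω = 0) := by
        rw [hq10]; exact mul_pos (by linarith) hq1pos
      -- pointwise identity
      have hpt : ∀ ω : Ω, (if X ω = x then P ω * φ ω else 0)
          = (1/(p x * e1 x)) *
              (if X ω = x ∧ S ω = 1 ∧ A ω = 1 then P ω * (Y1 ω - g1 x) else 0)
            - (1/(p x * (1 - e1 x))) *
              (if X ω = x ∧ S ω = 1 ∧ A ω = 0 then P ω * (Y0 ω - g0 x) else 0)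
            + (g1 x - g0 x) * (if X ω = x then P ω else 0) := by
        intro ω
        by_cases hx : X ω = x
        · rcases hS ω with hs | hs
          · have h1 : ¬ (X ω = x ∧ S ω = 1 ∧ A ω = 1) := by simp [hs]
            have h0 : ¬ (X ω = x ∧ S ω = 1 ∧ A ω = 0) := by simp [hs]
            rw [if_pos hx, if_pos hx, if_neg h1, if_neg h0, hφ ω, hx, hs]
            ring
          · have hy := hcons ω hs
            rcases hA ω with ha | ha
            · have h1 : ¬ (X ω = x ∧ S ω = 1 ∧ A ω = 1) := by simp [hs, ha]
              have h0 : X ω = x ∧ S ω = 1 ∧ A ω = 0 := ⟨hx, hs, ha⟩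
              rw [if_pos hx, if_pos hx, if_neg h1, if_pos h0, hφ ω, hx, hs, hy, ha]
              field_simp
              ring
            · have h1 : X ω = x ∧ S ω = 1 ∧ A ω = 1 := ⟨hx, hs, ha⟩
              have h0 : ¬ (X ω = x ∧ S ω = 1 ∧ A ω = 0) := by simp [hs, ha]
              rw [if_pos hx, if_pos hx, if_pos h1, if_neg h0, hφ ω, hx, hs, hy, ha]
              field_simp
              ring
        · have h1 : ¬ (X ω = x ∧ S ω = 1 ∧ A ω = 1) := fun h => hx h.1
          have h0 : ¬ (X ω = x ∧ S ω = 1 ∧ A ω = 0) := fun h => hx h.1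
          rw [if_neg hx, if_neg hx, if_neg h1, if_neg h0]
          ring
      -- sum the pointwise identity
      have hsum : (∑ ω, if X ω = x then P ω * φ ω else 0)
          = (1/(p x * e1 x)) *
              (∑ ω, if X ω = x ∧ S ω = 1 ∧ A ω = 1 then P ω * (Y1 ω - g1 x) else 0)
            - (1/(p x * (1 - e1 x))) *
              (∑ ω, if X ω = x ∧ S ω = 1 ∧ A ω = 0 then P ω * (Y0 ω - g0 x) else 0)
            + (g1 x - g0 x) * prW P (fun ω => X ω = x) := by
        simp only [prW]
        rw [Finset.mul_sum, Finset.mul_sum, Finset.mul_sum, ← Finset.sum_sub_distrib,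
          ← Finset.sum_add_distrib]
        exact Finset.sum_congr rfl fun ω _ => hpt ω
      -- rewrite the two augmented sums
      have hM11 : (∑ ω, if X ω = x ∧ S ω = 1 ∧ A ω = 1 then P ω * (Y1 ω - g1 x) else 0)
          = cexp P Y1 (fun ω => X ω = x ∧ S ω = 1)
              * prW P (fun ω => X ω = x ∧ S ω = 1 ∧ A ω = 1)
            - g1 x * prW P (fun ω => X ω = x ∧ S ω = 1 ∧ A ω = 1) := by
        rw [← hexchA1 x hq11pos]
        simp only [cexp]
        rw [div_mul_cancel₀ _ (ne_of_gt hq11pos)]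
        simp only [prW]
        rw [Finset.mul_sum, ← Finset.sum_sub_distrib]
        refine Finset.sum_congr rfl fun ω _ => ?_
        by_cases h : X ω = x ∧ S ω = 1 ∧ A ω = 1
        · simp only [if_pos h]; ring
        · simp only [if_neg h]; ring
      have hM10 : (∑ ω, if X ω = x ∧ S ω = 1 ∧ A ω = 0 then P ω * (Y0 ω - g0 x) else 0)
          = cexp P Y0 (fun ω => X ω = x ∧ S ω = 1)
              * prW P (fun ω => X ω = x ∧ S ω = 1 ∧ A ω = 0)
            - g0 x * prW P (fun ω => X ω = x ∧ S ω = 1 ∧ A ω = 0) := by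
        rw [← hexchA0 x hq10pos]
        simp only [cexp]
        rw [div_mul_cancel₀ _ (ne_of_gt hq10pos)]
        simp only [prW]
        rw [Finset.mul_sum, ← Finset.sum_sub_distrib]
        refine Finset.sum_congr rfl fun ω _ => ?_
        by_cases h : X ω = x ∧ S ω = 1 ∧ A ω = 0
        · simp only [if_pos h]; ring
        · simp only [if_neg h]; ring
      -- RHS
      have hRHS : (∑ ω, if X ω = x then P ω * (Y1 ω - Y0 ω) else 0)
          = cexp P (fun ω => Y1 ω - Y0 ω) (fun ω => X ω = x ∧ S ω = 1)
            * prW P (fun ω => X ω = x) := by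
        rw [hexchS x hq1pos]
        simp only [cexp]
        rw [div_mul_cancel₀ _ hqne]
      have hdiff : cexp P (fun ω => Y1 ω - Y0 ω) (fun ω => X ω = x ∧ S ω = 1)
          = cexp P Y1 (fun ω => X ω = x ∧ S ω = 1)
            - cexp P Y0 (fun ω => X ω = x ∧ S ω = 1) := by
        simp only [cexp, div_sub_div_same]
        congr 1
        rw [← Finset.sum_sub_distrib]
        refine Finset.sum_congr rfl fun ω _ => ?_
        by_cases h : X ω = x ∧ S ω = 1
        · simp only [if_pos h]; ring
        · simp only [if_neg h]; ring
      rw [hsum, hM11, hM10, hRHS, hdiff, hq11, hq10, hq1]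
      field_simp
      ring
    · have hq0 : prW P (fun ω => X ω = x) = 0 :=
        le_antisymm (not_lt.mp hq) (prW_nonneg P hP0 _)
      have h1 : ∀ g : Ω → ℝ, (∑ ω, if X ω = x then P ω * g ω else 0) = 0 := by
        intro g
        refine Finset.sum_eq_zero fun ω _ => ?_
        split_ifs with h
        · rw [prW_zero P hP0 hq0 h, zero_mul]
        · rfl
      rw [h1 φ, h1 (fun ω => Y1 ω - Y0 ω)]
  intro w hw
  have hnum : (∑ ω, if f (X ω) = w then P ω * φ ω else 0)
      = ∑ ω, if f (X ω) = w then P ω * (Y1 ω - Y0 ω) else 0 := by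
    have hmaps : ∀ ω ∈ (Finset.univ : Finset Ω), X ω ∈ Finset.univ.image X :=
      fun ω _ => Finset.mem_image_of_mem X (Finset.mem_univ ω)
    rw [← Finset.sum_fiberwise_of_maps_to hmaps
        (fun ω => if f (X ω) = w then P ω * φ ω else 0),
      ← Finset.sum_fiberwise_of_maps_to hmaps
        (fun ω => if f (X ω) = w then P ω * (Y1 ω - Y0 ω) else 0)]
    refine Finset.sum_congr rfl fun x _ => ?_
    rw [Finset.sum_filter, Finset.sum_filter]
    by_cases hfx : f x = w
    · have h1 : ∀ (g : Ω → ℝ) ω,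
          (if X ω = x then (if f (X ω) = w then P ω * g ω else 0) else 0)
            = (if X ω = x then P ω * g ω else 0) := by
        intro g ω
        by_cases h : X ω = x
        · simp [h, hfx]
        · simp [h]
      simp only [h1 φ, h1 (fun ω => Y1 ω - Y0 ω)]
      exact key x
    · have h1 : ∀ (g : Ω → ℝ) ω,
          (if X ω = x then (if f (X ω) = w then P ω * g ω else 0) else 0) = 0 := by
        intro g ω
        by_cases h : X ω = x
        · simp [h, hfx]
        · simp [h]
      simp only [h1 φ, h1 (fun ω => Y1 ω - Y0 ω)]
  simp only [cexp]
  rw [hnum]
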